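/- For all real numbers κ ≥ 0, M ≥ 1 and R > 0 there exists L ≥ 1 with the following property. Let Y be a metric space, let X be a 1-chained metric space, let γ : ℝ → Y be a κ-coarse geodesic, let Υ : Y → X be a map with d(Υ(y), Υ(y')) ≤ M · d(y, y') + M for all y, y' ∈ Y, and let Ψ : X → ℝ be a map such that (a) d(γ(Ψ(p)), γ(Ψ(q))) ≤ R for all p, q ∈ X with d(p, q) ≤ 1, and (b) d(γ(Ψ(Υ(γ(t)))), γ(t)) ≤ R for all t ∈ ℝ. Then Υ ∘ γ is an L-quasi-geodesic: |s − t|/L − L ≤ d(Υ(γ(s)), Υ(γ(t))) ≤ L|s − t| + L for all s, t ∈ ℝ. (This is the coarse Lipschitz retraction argument from the proof of Proposition 3.2 of the paper, showing that the image of a line of minima in the free factor graph is a parametrized quasi-geodesic.) -/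
import Mathlib


/-- A `κ`-coarse geodesic in a metric space: a (not necessarily continuous) map
`γ : ℝ → Y` with `|s − t| − κ ≤ d(γ s, γ t) ≤ |s − t| + κ` for all `s, t`. -/
def IsCoarseGeodesic {Y : Type*} [MetricSpace Y] (κ : ℝ) (γ : ℝ → Y) : Prop :=
  ∀ s t : ℝ, |s - t| - κ ≤ dist (γ s) (γ t) ∧ dist (γ s) (γ t) ≤ |s - t| + κ

/-- A metric space is `1`-chained if any two points can be joined by a chain of
points with consecutive distances at most `1`, whose number of steps is at most
the distance plus one. -/
def IsOneChained (X : Type*) [MetricSpace X] : Prop :=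
  ∀ p q : X, ∃ (N : ℕ) (x : ℕ → X),
    (N : ℝ) ≤ dist p q + 1 ∧ x 0 = p ∧ x N = q ∧
    ∀ i : ℕ, i < N → dist (x i) (x (i + 1)) ≤ 1

/-- The coarse Lipschitz retraction argument: if a coarsely Lipschitz map `Υ`
into a `1`-chained space admits a coarse retraction `Ψ` back onto a coarse
geodesic `γ`, then `Υ ∘ γ` is a parametrized quasi-geodesic. -/
theorem coarse_retraction_gives_quasigeodesic
    (κ M R : ℝ) (hκ : 0 ≤ κ) (hM : 1 ≤ M) (hR : 0 < R) :
    ∃ L ≥ (1 : ℝ), ∀ (Y : Type) [MetricSpace Y] (X : Type) [MetricSpace X],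
      IsOneChained X →
      ∀ (γ : ℝ → Y) (Υ : Y → X) (Ψ : X → ℝ),
        IsCoarseGeodesic κ γ →
        (∀ y y' : Y, dist (Υ y) (Υ y') ≤ M * dist y y' + M) →
        (∀ p q : X, dist p q ≤ 1 → dist (γ (Ψ p)) (γ (Ψ q)) ≤ R) →
        (∀ t : ℝ, dist (γ (Ψ (Υ (γ t)))) (γ t) ≤ R) →
        ∀ s t : ℝ,
          |s - t| / L - L ≤ dist (Υ (γ s)) (Υ (γ t)) ∧
          dist (Υ (γ s)) (Υ (γ t)) ≤ L * |s - t| + L := by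

  have hκR : 0 ≤ κ / R := div_nonneg hκ hR.le
  refine ⟨M * κ + M + R + κ / R + 4, by nlinarith, ?_⟩
  intro Y _ X _ hX γ Υ Ψ hγ hΥ hΨ1 hΨ2 s t
  have hMk : 0 ≤ M * κ := mul_nonneg (by linarith) hκ
  set L := M * κ + M + R + κ / R + 4 with hLdef
  have hLR : R ≤ L := by rw [hLdef]; linarith
  have hκ3 : κ / R + 3 ≤ L := by rw [hLdef]; linarith
  constructor
  · -- lower bound
    obtain ⟨N, x, hN, hx0, hxN, hstep⟩ := hX (Υ (γ s)) (Υ (γ t))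
    have hchain : ∀ i, i ≤ N → dist (γ (Ψ (x 0))) (γ (Ψ (x i))) ≤ i * R := by
      intro i hi
      induction i with
      | zero => simp
      | succ n ih =>
        have h1 := ih (Nat.le_of_succ_le hi)
        have h2 := hΨ1 (x n) (x (n + 1)) (hstep n (by omega))
        have h3 := dist_triangle (γ (Ψ (x 0))) (γ (Ψ (x n))) (γ (Ψ (x (n + 1))))
        push_cast
        linarith
    have hN' := hchain N le_rfl
    rw [hx0, hxN] at hN'
    have h1 := hΨ2 s
    have h2 := hΨ2 t
    rw [dist_comm] at h1
    have t1 := dist_triangle (γ s) (γ (Ψ (Υ (γ s)))) (γ t)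
    have t2 := dist_triangle (γ (Ψ (Υ (γ s)))) (γ (Ψ (Υ (γ t)))) (γ t)
    have hlow := (hγ s t).1
    have hNR : (N : ℝ) * R ≤ (dist (Υ (γ s)) (Υ (γ t)) + 1) * R :=
      mul_le_mul_of_nonneg_right hN hR.le
    have key : |s - t| ≤ R * dist (Υ (γ s)) (Υ (γ t)) + κ + 3 * R := by nlinarith
    have hcc : κ / R * R = κ := div_mul_cancel₀ κ hR.ne'
    have h4 : |s - t| / R ≤ dist (Υ (γ s)) (Υ (γ t)) + κ / R + 3 := by
      rw [div_le_iff₀ hR]; nlinarith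
    have h3 : |s - t| / L ≤ |s - t| / R :=
      div_le_div_of_nonneg_left (abs_nonneg _) hR hLR
    linarith
  · -- upper bound
    have h1 := hΥ (γ s) (γ t)
    have h2 := (hγ s t).2
    have h3 := abs_nonneg (s - t)
    have h4 := dist_nonneg (x := γ s) (y := γ t)
    have h5 : M * dist (γ s) (γ t) ≤ M * (|s - t| + κ) :=
      mul_le_mul_of_nonneg_left h2 (by linarith)
    have h6 : M * |s - t| ≤ L * |s - t| :=
      mul_le_mul_of_nonneg_right (by rw [hLdef]; linarith) h3
    have h7 : M * (|s - t| + κ) = M * |s - t| + M * κ := by ring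
    have h8 : M * κ + M ≤ L := by rw [hLdef]; linarith
    linarith
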